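/- arXiv:1003.3377 — 2 statements merged into one kernel-verified Lean document; each statement's English description precedes it below -/
import Mathlib

section
/- Let A be a Banach algebra and B a Banach A-bimodule. Then b′a ∈ wap_ℓ(B) for every b′ ∈ B* and a ∈ A (where (b′a)(b) := b′(π_ℓ(a, b))) if and only if â·a″ ∈ Z^ℓ_{B**}(A**) for every a ∈ A and a″ ∈ A** (where â·a″ is the first Arens product of the canonical image â of a with a″). -/
/- Common setup: Arens extensions of bounded bilinear maps between Banach spaces,
weak*–weak* continuity, and related notions. -/

open NormedSpace ContinuousLinearMap Filter Topology

/- Port helper instances: in the current Lean, instance search no longer finds the operator-norm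
structures on triply nested spaces of continuous linear maps (nested `synthPending` depth);
these one-level-nested instances (found by `inferInstance`, so definitionally Mathlib's) restore it. -/
noncomputable instance instSeminormedAddCommGroupCLMCLM {𝕜 E F G : Type*} [NontriviallyNormedField 𝕜]
    [SeminormedAddCommGroup E] [NormedSpace 𝕜 E] [SeminormedAddCommGroup F] [NormedSpace 𝕜 F]
    [SeminormedAddCommGroup G] [NormedSpace 𝕜 G] :
    SeminormedAddCommGroup (E →L[𝕜] F →L[𝕜] G) := inferInstance

noncomputable instance instNormedSpaceCLMCLM {𝕜 E F G : Type*} [NontriviallyNormedField 𝕜]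
    [SeminormedAddCommGroup E] [NormedSpace 𝕜 E] [SeminormedAddCommGroup F] [NormedSpace 𝕜 F]
    [SeminormedAddCommGroup G] [NormedSpace 𝕜 G] :
    NormedSpace 𝕜 (E →L[𝕜] F →L[𝕜] G) := inferInstance

noncomputable instance instSeminormedAddCommGroupCLMCLM' {𝕜 E F G : Type*} [NontriviallyNormedField 𝕜]
    [SeminormedAddCommGroup E] [NormedSpace 𝕜 E] [SeminormedAddCommGroup F] [NormedSpace 𝕜 F]
    [SeminormedAddCommGroup G] [NormedSpace 𝕜 G] :
    SeminormedAddCommGroup ((E →L[𝕜] F) →L[𝕜] G) := inferInstance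

noncomputable instance instNormedSpaceCLMCLM' {𝕜 E F G : Type*} [NontriviallyNormedField 𝕜]
    [SeminormedAddCommGroup E] [NormedSpace 𝕜 E] [SeminormedAddCommGroup F] [NormedSpace 𝕜 F]
    [SeminormedAddCommGroup G] [NormedSpace 𝕜 G] :
    NormedSpace 𝕜 ((E →L[𝕜] F) →L[𝕜] G) := inferInstance

noncomputable instance instSeminormedAddCommGroupCLMCLM'' {𝕜 E F G H : Type*}
    [NontriviallyNormedField 𝕜]
    [SeminormedAddCommGroup E] [NormedSpace 𝕜 E] [SeminormedAddCommGroup F] [NormedSpace 𝕜 F]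
    [SeminormedAddCommGroup G] [NormedSpace 𝕜 G] [SeminormedAddCommGroup H] [NormedSpace 𝕜 H] :
    SeminormedAddCommGroup ((E →L[𝕜] F) →L[𝕜] G →L[𝕜] H) := inferInstance

noncomputable instance instNormedSpaceCLMCLM'' {𝕜 E F G H : Type*} [NontriviallyNormedField 𝕜]
    [SeminormedAddCommGroup E] [NormedSpace 𝕜 E] [SeminormedAddCommGroup F] [NormedSpace 𝕜 F]
    [SeminormedAddCommGroup G] [NormedSpace 𝕜 G] [SeminormedAddCommGroup H] [NormedSpace 𝕜 H] :
    NormedSpace 𝕜 ((E →L[𝕜] F) →L[𝕜] G →L[𝕜] H) := inferInstance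

section ArensDefs

variable (𝕜 : Type*) [RCLike 𝕜]
variable {X Y Z : Type*}
  [NormedAddCommGroup X] [NormedSpace 𝕜 X]
  [NormedAddCommGroup Y] [NormedSpace 𝕜 Y]
  [NormedAddCommGroup Z] [NormedSpace 𝕜 Z]

/-- The first adjoint `m*` of a bounded bilinear map `m : X × Y → Z`, characterized by
`⟨m*(z′,x), y⟩ = ⟨z′, m(x,y)⟩`. -/
noncomputable def arensS (m : X →L[𝕜] Y →L[𝕜] Z) :
    StrongDual 𝕜 Z →L[𝕜] X →L[𝕜] StrongDual 𝕜 Y :=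
  ((compL 𝕜 X (Y →L[𝕜] Z) (StrongDual 𝕜 Y)).flip m).comp (compL 𝕜 Y Z 𝕜)

/-- The second adjoint `m**`, characterized by `⟨m**(y″,z′), x⟩ = ⟨y″, m*(z′,x)⟩`. -/
noncomputable def arensSS (m : X →L[𝕜] Y →L[𝕜] Z) :
    StrongDual 𝕜 (StrongDual 𝕜 Y) →L[𝕜] StrongDual 𝕜 Z →L[𝕜] StrongDual 𝕜 X :=
  ((compL 𝕜 (StrongDual 𝕜 Z) (X →L[𝕜] StrongDual 𝕜 Y) (StrongDual 𝕜 X)).flip (arensS 𝕜 m)).comp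
    (compL 𝕜 X (StrongDual 𝕜 Y) 𝕜)

/-- The Arens (triple adjoint) extension `m***` of a bounded bilinear map, characterized by
`⟨m***(x″,y″), z′⟩ = ⟨x″, m**(y″,z′)⟩`. -/
noncomputable def arensExt (m : X →L[𝕜] Y →L[𝕜] Z) :
    StrongDual 𝕜 (StrongDual 𝕜 X) →L[𝕜] StrongDual 𝕜 (StrongDual 𝕜 Y) →L[𝕜] StrongDual 𝕜 (StrongDual 𝕜 Z) :=
  ((compL 𝕜 (StrongDual 𝕜 (StrongDual 𝕜 Y)) (StrongDual 𝕜 Z →L[𝕜] StrongDual 𝕜 X) (StrongDual 𝕜 (StrongDual 𝕜 Z))).flip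
      (arensSS 𝕜 m)).comp
    (compL 𝕜 (StrongDual 𝕜 Z) (StrongDual 𝕜 X) 𝕜)

end ArensDefs

/-- A map between dual spaces is weak*–weak* continuous if it is continuous with respect to
the weak* topologies on both sides. -/
def IsWeakStarWeakStarContinuous (𝕜 : Type*) [RCLike 𝕜] {E F : Type*}
    [NormedAddCommGroup E] [NormedSpace 𝕜 E]
    [NormedAddCommGroup F] [NormedSpace 𝕜 F]
    (T : StrongDual 𝕜 E → StrongDual 𝕜 F) : Prop :=
  Continuous fun x : WeakDual 𝕜 E =>
    (StrongDual.toWeakDual (T (WeakDual.toStrongDual x)) : WeakDual 𝕜 F)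

/-- `b′ ∈ wap_ℓ(B)`: for every `a″ ∈ A**` the functional `b″ ↦ ⟨π_ℓ***(a″, b″), b′⟩` is
weak*-continuous on `B**`. -/
def MemWapLeft (𝕜 : Type*) [RCLike 𝕜] {A B : Type*}
    [NormedAddCommGroup A] [NormedSpace 𝕜 A]
    [NormedAddCommGroup B] [NormedSpace 𝕜 B]
    (πℓ : A →L[𝕜] B →L[𝕜] B) (b' : StrongDual 𝕜 B) : Prop :=
  ∀ a'' : StrongDual 𝕜 (StrongDual 𝕜 A),
    Continuous fun b'' : WeakDual 𝕜 (StrongDual 𝕜 B) =>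
      arensExt 𝕜 πℓ a'' (WeakDual.toStrongDual b'') b'

/-!
Pairing with `b′ ∈ B*`, the first Arens product satisfies
`⟨π_ℓ***(â·a″, b″), b′⟩ = ⟨π_ℓ***(a″, b″), b′a⟩`, because `⟨â·a″, f⟩ = ⟨a″, f·a⟩` and
`π_ℓ**(b″, b′)·a = π_ℓ**(b″, b′a)` by associativity of the left action. A map into `B**` is
weak*–weak* continuous iff all its pairings with `b′ ∈ B*` are weak*-continuous, so both sides
of the equivalence say that `b″ ↦ ⟨π_ℓ***(a″, b″), b′a⟩` is weak*-continuous for all `a, a″, b′`.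
-/

section ArensExtension

variable {𝕜 : Type*} [RCLike 𝕜] {X Y Z : Type*}
  [NormedAddCommGroup X] [NormedSpace 𝕜 X]
  [NormedAddCommGroup Y] [NormedSpace 𝕜 Y]
  [NormedAddCommGroup Z] [NormedSpace 𝕜 Z]

@[simp]
lemma arensS_apply (m : X →L[𝕜] Y →L[𝕜] Z) (z' : StrongDual 𝕜 Z) (x : X) (y : Y) :
    arensS 𝕜 m z' x y = z' (m x y) := rfl

@[simp]
lemma arensSS_apply (m : X →L[𝕜] Y →L[𝕜] Z) (y'' : StrongDual 𝕜 (StrongDual 𝕜 Y))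
    (z' : StrongDual 𝕜 Z) (x : X) :
    arensSS 𝕜 m y'' z' x = y'' (arensS 𝕜 m z' x) := rfl

@[simp]
lemma arensExt_apply (m : X →L[𝕜] Y →L[𝕜] Z) (x'' : StrongDual 𝕜 (StrongDual 𝕜 X))
    (y'' : StrongDual 𝕜 (StrongDual 𝕜 Y)) (z' : StrongDual 𝕜 Z) :
    arensExt 𝕜 m x'' y'' z' = x'' (arensSS 𝕜 m y'' z') := rfl

end ArensExtension

lemma isWeakStarWeakStarContinuous_iff {𝕜 : Type*} [RCLike 𝕜] {E F : Type*}
    [NormedAddCommGroup E] [NormedSpace 𝕜 E] [NormedAddCommGroup F] [NormedSpace 𝕜 F]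
    {T : StrongDual 𝕜 E → StrongDual 𝕜 F} :
    IsWeakStarWeakStarContinuous 𝕜 T ↔
      ∀ f : F, Continuous fun x : WeakDual 𝕜 E => T (WeakDual.toStrongDual x) f :=
  ⟨fun hT f => (WeakDual.eval_continuous f).comp hT,
    fun hT => WeakBilin.continuous_of_continuous_eval _ hT⟩

section LeftModule

variable {𝕜 : Type*} [RCLike 𝕜]
  {A : Type*} [NonUnitalNormedRing A] [NormedSpace 𝕜 A] [IsScalarTower 𝕜 A A] [SMulCommClass 𝕜 A A]

lemma arensExt_mul_inclusionInDoubleDual_apply (a : A) (a'' : StrongDual 𝕜 (StrongDual 𝕜 A))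
    (f : StrongDual 𝕜 A) :
    arensExt 𝕜 (mul 𝕜 A) (inclusionInDoubleDual 𝕜 A a) a'' f = a'' (f.comp (mul 𝕜 A a)) :=
  rfl

variable {B : Type*} [NormedAddCommGroup B] [NormedSpace 𝕜 B] {πℓ : A →L[𝕜] B →L[𝕜] B}

lemma arensSS_comp_mul_left (hℓ : ∀ (a₁ a₂ : A) (b : B), πℓ (a₁ * a₂) b = πℓ a₁ (πℓ a₂ b))
    (b'' : StrongDual 𝕜 (StrongDual 𝕜 B)) (b' : StrongDual 𝕜 B) (a : A) :
    (arensSS 𝕜 πℓ b'' b').comp (mul 𝕜 A a) = arensSS 𝕜 πℓ b'' (b'.comp (πℓ a)) := by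
  ext c
  simp only [comp_apply, mul_apply', arensSS_apply]
  congr 1
  ext b
  simp only [comp_apply, arensS_apply, hℓ]

lemma arensExt_arensProduct_inclusionInDoubleDual_apply
    (hℓ : ∀ (a₁ a₂ : A) (b : B), πℓ (a₁ * a₂) b = πℓ a₁ (πℓ a₂ b))
    (a : A) (a'' : StrongDual 𝕜 (StrongDual 𝕜 A)) (b'' : StrongDual 𝕜 (StrongDual 𝕜 B))
    (b' : StrongDual 𝕜 B) :
    arensExt 𝕜 πℓ (arensExt 𝕜 (mul 𝕜 A) (inclusionInDoubleDual 𝕜 A a) a'') b'' b' =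
      arensExt 𝕜 πℓ a'' b'' (b'.comp (πℓ a)) := by
  rw [arensExt_apply, arensExt_mul_inclusionInDoubleDual_apply, arensSS_comp_mul_left hℓ,
    arensExt_apply]

end LeftModule

theorem wapLeft_smul_iff_arensProduct_mem_leftTopologicalCenter_general
    {𝕜 : Type*} [RCLike 𝕜]
    {A : Type*} [NonUnitalNormedRing A] [NormedSpace 𝕜 A]
    [IsScalarTower 𝕜 A A] [SMulCommClass 𝕜 A A]
    {B : Type*} [NormedAddCommGroup B] [NormedSpace 𝕜 B]
    (πℓ : A →L[𝕜] B →L[𝕜] B)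
    (hℓ : ∀ (a₁ a₂ : A) (b : B), πℓ (a₁ * a₂) b = πℓ a₁ (πℓ a₂ b)) :
    (∀ (b' : StrongDual 𝕜 B) (a : A), MemWapLeft 𝕜 πℓ (b'.comp (πℓ a))) ↔
      ∀ (a : A) (a'' : StrongDual 𝕜 (StrongDual 𝕜 A)),
        IsWeakStarWeakStarContinuous 𝕜
          (fun b'' : StrongDual 𝕜 (StrongDual 𝕜 B) =>
            arensExt 𝕜 πℓ
              (arensExt 𝕜 (ContinuousLinearMap.mul 𝕜 A)
                (inclusionInDoubleDual 𝕜 A a) a'') b'') := by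
  simp only [MemWapLeft, isWeakStarWeakStarContinuous_iff,
    arensExt_arensProduct_inclusionInDoubleDual_apply hℓ]
  exact ⟨fun h a a'' b' => h b' a a'', fun h b' a a'' => h a a'' b'⟩

/-- `b′a ∈ wap_ℓ(B)` for every `b′ ∈ B*`, `a ∈ A` iff
`â·a″ ∈ Z^ℓ_{B**}(A**)` for every `a ∈ A`, `a″ ∈ A**` (first Arens product). -/
theorem wapLeft_smul_iff_arensProduct_mem_leftTopologicalCenter
    {𝕜 : Type*} [RCLike 𝕜]
    {A : Type*} [NonUnitalNormedRing A] [NormedSpace 𝕜 A]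
    [IsScalarTower 𝕜 A A] [SMulCommClass 𝕜 A A] [CompleteSpace A]
    {B : Type*} [NormedAddCommGroup B] [NormedSpace 𝕜 B] [CompleteSpace B]
    (πℓ : A →L[𝕜] B →L[𝕜] B) (πr : B →L[𝕜] A →L[𝕜] B)
    (hℓ : ∀ (a₁ a₂ : A) (b : B), πℓ (a₁ * a₂) b = πℓ a₁ (πℓ a₂ b))
    (hr : ∀ (b : B) (a₁ a₂ : A), πr b (a₁ * a₂) = πr (πr b a₁) a₂)
    (hℓr : ∀ (a₁ : A) (b : B) (a₂ : A), πr (πℓ a₁ b) a₂ = πℓ a₁ (πr b a₂)) :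
    (∀ (b' : StrongDual 𝕜 B) (a : A), MemWapLeft 𝕜 πℓ (b'.comp (πℓ a))) ↔
      ∀ (a : A) (a'' : StrongDual 𝕜 (StrongDual 𝕜 A)),
        IsWeakStarWeakStarContinuous 𝕜
          (fun b'' : StrongDual 𝕜 (StrongDual 𝕜 B) =>
            arensExt 𝕜 πℓ
              (arensExt 𝕜 (ContinuousLinearMap.mul 𝕜 A)
                (inclusionInDoubleDual 𝕜 A a) a'') b'') :=
  wapLeft_smul_iff_arensProduct_mem_leftTopologicalCenter_general πℓ hℓ
end

section
/- Let A be a Banach algebra and B a left Banach A-module, and suppose e ∈ A satisfies π_ℓ(e, b) = b for all b ∈ B. If e has the Lw*w-property with respect to B, i.e., for every net (b′_α) in B*, convergence to 0 in the weak* topology of B* of the net of translates (b ↦ b′_α(π_ℓ(e, b))) implies its convergence to 0 in the weak topology of B*, then B is reflexive (the canonical embedding of B into B** is surjective). -/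
/- Common setup: Arens extensions of bounded bilinear maps between Banach spaces,
weak*–weak* continuity, and related notions. -/

open NormedSpace ContinuousLinearMap Filter Topology

section ArensDefs

variable (𝕜 : Type*) [RCLike 𝕜]
variable {X Y Z : Type*}
  [NormedAddCommGroup X] [NormedSpace 𝕜 X]
  [NormedAddCommGroup Y] [NormedSpace 𝕜 Y]
  [NormedAddCommGroup Z] [NormedSpace 𝕜 Z]

/-- Port helper: the norm instance on `StrongDual 𝕜 Z →L[𝕜] X →L[𝕜] StrongDual 𝕜 Y`, given explicitly. -/
@[reducible] noncomputable def arensInstS1 : SeminormedAddCommGroup (StrongDual 𝕜 Z →L[𝕜] X →L[𝕜] StrongDual 𝕜 Y) :=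
  @ContinuousLinearMap.toSeminormedAddCommGroup 𝕜 𝕜 (StrongDual 𝕜 Z) (X →L[𝕜] StrongDual 𝕜 Y) _ _ _ _ _ _ (RingHom.id 𝕜) _

/-- Port helper: the normed-space instance on `StrongDual 𝕜 Z →L[𝕜] X →L[𝕜] StrongDual 𝕜 Y`, given explicitly. -/
@[reducible] noncomputable def arensInstN1 : @NormedSpace 𝕜 (StrongDual 𝕜 Z →L[𝕜] X →L[𝕜] StrongDual 𝕜 Y) _ (arensInstS1 𝕜) :=
  @ContinuousLinearMap.toNormedSpace 𝕜 𝕜 (StrongDual 𝕜 Z) (X →L[𝕜] StrongDual 𝕜 Y) _ _ _ _ _ _ (RingHom.id 𝕜) _ 𝕜 _ _ _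

attribute [local instance] arensInstS1 arensInstN1

/-- Port helper: the norm instance on `StrongDual 𝕜 (StrongDual 𝕜 Y) →L[𝕜] StrongDual 𝕜 (StrongDual 𝕜 Z)`, given explicitly. -/
@[reducible] noncomputable def arensInstS2 : SeminormedAddCommGroup (StrongDual 𝕜 (StrongDual 𝕜 Y) →L[𝕜] StrongDual 𝕜 (StrongDual 𝕜 Z)) :=
  @ContinuousLinearMap.toSeminormedAddCommGroup 𝕜 𝕜 (StrongDual 𝕜 (StrongDual 𝕜 Y)) (StrongDual 𝕜 (StrongDual 𝕜 Z)) _ _ _ _ _ _ (RingHom.id 𝕜) _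

/-- Port helper: the norm instance on `StrongDual 𝕜 (StrongDual 𝕜 Y) →L[𝕜] StrongDual 𝕜 Z →L[𝕜] StrongDual 𝕜 X`, given explicitly. -/
@[reducible] noncomputable def arensInstS3 : SeminormedAddCommGroup (StrongDual 𝕜 (StrongDual 𝕜 Y) →L[𝕜] StrongDual 𝕜 Z →L[𝕜] StrongDual 𝕜 X) :=
  @ContinuousLinearMap.toSeminormedAddCommGroup 𝕜 𝕜 (StrongDual 𝕜 (StrongDual 𝕜 Y)) (StrongDual 𝕜 Z →L[𝕜] StrongDual 𝕜 X) _ _ _ _ _ _ (RingHom.id 𝕜) _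

/-- Port helper: the normed-space instance on `StrongDual 𝕜 (StrongDual 𝕜 Y) →L[𝕜] StrongDual 𝕜 Z →L[𝕜] StrongDual 𝕜 X`, given explicitly. -/
@[reducible] noncomputable def arensInstN3 : @NormedSpace 𝕜 (StrongDual 𝕜 (StrongDual 𝕜 Y) →L[𝕜] StrongDual 𝕜 Z →L[𝕜] StrongDual 𝕜 X) _ (arensInstS3 𝕜) :=
  @ContinuousLinearMap.toNormedSpace 𝕜 𝕜 (StrongDual 𝕜 (StrongDual 𝕜 Y)) (StrongDual 𝕜 Z →L[𝕜] StrongDual 𝕜 X) _ _ _ _ _ _ (RingHom.id 𝕜) _ 𝕜 _ _ _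

/-- Port helper: the norm instance on `(StrongDual 𝕜 Z →L[𝕜] StrongDual 𝕜 X) →L[𝕜] StrongDual 𝕜 (StrongDual 𝕜 Z)`, given explicitly. -/
@[reducible] noncomputable def arensInstS4 : SeminormedAddCommGroup ((StrongDual 𝕜 Z →L[𝕜] StrongDual 𝕜 X) →L[𝕜] StrongDual 𝕜 (StrongDual 𝕜 Z)) :=
  @ContinuousLinearMap.toSeminormedAddCommGroup 𝕜 𝕜 ((StrongDual 𝕜 Z →L[𝕜] StrongDual 𝕜 X)) (StrongDual 𝕜 (StrongDual 𝕜 Z)) _ _ _ _ _ _ (RingHom.id 𝕜) _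

/-- Port helper: the normed-space instance on `(StrongDual 𝕜 Z →L[𝕜] StrongDual 𝕜 X) →L[𝕜] StrongDual 𝕜 (StrongDual 𝕜 Z)`, given explicitly. -/
@[reducible] noncomputable def arensInstN4 : @NormedSpace 𝕜 ((StrongDual 𝕜 Z →L[𝕜] StrongDual 𝕜 X) →L[𝕜] StrongDual 𝕜 (StrongDual 𝕜 Z)) _ (arensInstS4 𝕜) :=
  @ContinuousLinearMap.toNormedSpace 𝕜 𝕜 ((StrongDual 𝕜 Z →L[𝕜] StrongDual 𝕜 X)) (StrongDual 𝕜 (StrongDual 𝕜 Z)) _ _ _ _ _ _ (RingHom.id 𝕜) _ 𝕜 _ _ _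

/-- Port helper: the normed-space instance on `StrongDual 𝕜 (StrongDual 𝕜 Y) →L[𝕜] StrongDual 𝕜 (StrongDual 𝕜 Z)`, given explicitly. -/
@[reducible] noncomputable def arensInstN2 : @NormedSpace 𝕜 (StrongDual 𝕜 (StrongDual 𝕜 Y) →L[𝕜] StrongDual 𝕜 (StrongDual 𝕜 Z)) _ (arensInstS2 𝕜) :=
  @ContinuousLinearMap.toNormedSpace 𝕜 𝕜 (StrongDual 𝕜 (StrongDual 𝕜 Y)) (StrongDual 𝕜 (StrongDual 𝕜 Z)) _ _ _ _ _ _ (RingHom.id 𝕜) _ 𝕜 _ _ _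

attribute [local instance] arensInstS2 arensInstN2 arensInstS3 arensInstN3 arensInstS4 arensInstN4

end ArensDefs

/-! Since `πℓ e = id`, the hypothesis says that weak*-null nets in `B*` are weakly null. The index
type of these nets lives in an arbitrary universe, so only nets indexed by `ℕ`, along a free
ultrafilter, are available. If `F ∈ B**` lies at distance `d > 0` from the closed subspace `B`,
choose alternately `xₙ` in the unit ball of `B*` vanishing at `b₀, …, bₙ₋₁` with `‖F xₙ‖ ≥ d / 2`
(Hahn–Banach), and `bₙ ∈ B` with `‖bₙ‖ < ‖F‖ + 1` and `xᵢ bₙ = F xᵢ` for `i ≤ n` (Helly). Along a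
free ultrafilter `xₙ → Φ` weak* in `B*` and `bₙ → Ψ` weak* in `B**` (Banach–Alaoglu); then
`Φ bⱼ = 0` and `Ψ xᵢ = F xᵢ`, hence `Ψ Φ = 0`. Testing the weakly null sequence `xₙ - Φ` against
`Ψ` gives `F xₙ → 0`, contradicting `‖F xₙ‖ ≥ d / 2`. -/

theorem exists_seq_interleave {α β : Type*} {P : ∀ n, (Fin n → β) → α → Prop}
    {Q : ∀ n, (Fin (n + 1) → α) → β → Prop} (hP : ∀ n bs, ∃ a, P n bs a)
    (hQ : ∀ n as, ∃ b, Q n as b) :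
    ∃ (a : ℕ → α) (b : ℕ → β),
      (∀ n, P n (fun j => b j) (a n)) ∧ ∀ n, Q n (fun i => a i) (b n) := by
  choose f hf using hP
  choose g hg using hQ
  let p : ℕ → α × β := Nat.strongRec fun n prev =>
    let a := f n fun j => (prev j j.2).2
    (a, g n (Fin.snoc (fun i : Fin n => (prev i i.2).1) a))
  have hp (n : ℕ) : p n = (f n fun j => (p j).2,
      g n (Fin.snoc (fun i : Fin n => (p i).1) (f n fun j => (p j).2))) :=
    Nat.strongRec_eq _ n
  refine ⟨fun n => (p n).1, fun n => (p n).2, fun n => ?_, fun n => ?_⟩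
  · dsimp only
    rw [hp n]
    exact hf n _
  · have hsnoc : (fun i : Fin (n + 1) => (p i).1) = Fin.snoc (fun i : Fin n => (p i).1) (p n).1 := by
      funext i
      induction i using Fin.lastCases with
      | last => simp
      | cast i => simp
    dsimp only
    rw [hsnoc, hp n]
    exact hg n _

section DoubleDual

variable {𝕜 : Type*} [RCLike 𝕜] {E : Type*} [NormedAddCommGroup E] [NormedSpace 𝕜 E]

open Metric

theorem mem_range_inclusionInDoubleDual_of_forall_eq_zero {ι : Type*} [Finite ι] (v : ι → E)
    (Λ : StrongDual 𝕜 (StrongDual 𝕜 E)) (h : ∀ x : StrongDual 𝕜 E, (∀ i, x (v i) = 0) → Λ x = 0) :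
    Λ ∈ Set.range (inclusionInDoubleDual 𝕜 E) := by
  have hspan := mem_span_of_iInf_ker_le_ker (L := fun i => (topDualPairing 𝕜 E).flip (v i))
    (K := (Λ : StrongDual 𝕜 E →ₗ[𝕜] 𝕜)) fun x hx => by
      simp only [Submodule.mem_iInf, LinearMap.mem_ker] at hx ⊢
      exact h x hx
  have := Fintype.ofFinite ι
  obtain ⟨c, hc⟩ := (Submodule.mem_span_range_iff_exists_fun 𝕜).1 hspan
  refine ⟨∑ i, c i • v i, ContinuousLinearMap.ext fun x => ?_⟩
  simpa using LinearMap.congr_fun hc x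

theorem exists_forall_apply_eq_zero_half_infDist_le {ι : Type*} [Finite ι]
    (F : StrongDual 𝕜 (StrongDual 𝕜 E)) (v : ι → E) :
    ∃ x : StrongDual 𝕜 E, ‖x‖ ≤ 1 ∧ (∀ i, x (v i) = 0) ∧
      infDist F (Set.range (inclusionInDoubleDual 𝕜 E)) / 2 ≤ ‖F x‖ := by
  set d := infDist F (Set.range (inclusionInDoubleDual 𝕜 E))
  -- Otherwise a Hahn–Banach extension `g` of `F` restricted to the common kernel has
  -- `‖g‖ ≤ d / 2`, while `F - g` is an evaluation, so `d ≤ ‖g‖`.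
  by_contra! h
  let p : Submodule 𝕜 (StrongDual 𝕜 E) := ⨅ i, LinearMap.ker ((topDualPairing 𝕜 E).flip (v i))
  have hp (x : StrongDual 𝕜 E) : x ∈ p ↔ ∀ i, x (v i) = 0 := by simp [p]
  have hd : 0 < d := by simpa using h 0 (by simp) (by simp)
  obtain ⟨g, hgF, hg⟩ := exists_extension_norm_eq p (F.comp p.subtypeL)
  have hgd : ‖g‖ ≤ d / 2 := hg ▸
    opNorm_le_of_unit_norm (by positivity) fun y hy =>
      (h y (by simpa using hy.le) ((hp y).1 y.2)).le
  obtain ⟨w, hw⟩ := mem_range_inclusionInDoubleDual_of_forall_eq_zero v (F - g) fun x hx => by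
    simpa [sub_eq_zero] using (hgF ⟨x, (hp x).2 hx⟩).symm
  have : d ≤ ‖g‖ :=
    calc d ≤ dist F (inclusionInDoubleDual 𝕜 E w) := infDist_le_dist_of_mem (Set.mem_range_self w)
      _ = ‖g‖ := (dist_eq_norm F _).trans (by rw [hw]; congr 1; abel)
  linarith

theorem exists_norm_lt_forall_apply_eq {ι : Type*} [Finite ι]
    (F : StrongDual 𝕜 (StrongDual 𝕜 E)) (x : ι → StrongDual 𝕜 E) {ε : ℝ} (hε : 0 < ε) :
    ∃ v : E, ‖v‖ < ‖F‖ + ε ∧ ∀ i, x i v = F (x i) := by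
  -- `E ⧸ K` is finite-dimensional, so `F`, read on its dual, is evaluation at some `w` with
  -- `‖w‖ ≤ ‖F‖`; lift `w` to `E`.
  let K : Submodule 𝕜 E := ⨅ i, LinearMap.ker (x i : E →ₗ[𝕜] 𝕜)
  have : IsClosed (K : Set E) := by
    simpa [K, Submodule.coe_iInf] using isClosed_iInter fun i => (x i).isClosed_ker
  have : FiniteDimensional 𝕜 (E ⧸ K) :=
    Module.Finite.of_injective _ <| LinearMap.ker_eq_bot.1 <|
      K.ker_liftQ_eq_bot' (LinearMap.pi fun i => (x i : E →ₗ[𝕜] 𝕜)) (LinearMap.ker_pi _).symm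
  let G : Module.Dual 𝕜 (Module.Dual 𝕜 (E ⧸ K)) :=
    (F.comp ((compL 𝕜 E (E ⧸ K) 𝕜).flip K.mkQL)).toLinearMap ∘ₗ
      LinearMap.toContinuousLinearMap.toLinearMap
  set w := (Module.evalEquiv 𝕜 (E ⧸ K)).symm G
  have hw (φ : StrongDual 𝕜 (E ⧸ K)) : φ w = F (φ.comp K.mkQL) :=
    Module.apply_evalEquiv_symm_apply 𝕜 (E ⧸ K) (φ : Module.Dual 𝕜 (E ⧸ K)) G
  have hwF : ‖w‖ ≤ ‖F‖ := by
    refine norm_le_dual_bound 𝕜 w (norm_nonneg F) fun φ => ?_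
    have hφq : ‖φ.comp K.mkQL‖ ≤ ‖φ‖ :=
      opNorm_le_bound _ (norm_nonneg _) fun v =>
        (φ.le_opNorm _).trans (by gcongr; exact Submodule.Quotient.norm_mk_le K v)
    rw [hw]
    exact (F.le_opNorm _).trans (by gcongr)
  obtain ⟨v, hvw, hv⟩ := Submodule.Quotient.norm_mk_lt w hε
  refine ⟨v, by linarith, fun i => ?_⟩
  let ξ : StrongDual 𝕜 (E ⧸ K) := LinearMap.toContinuousLinearMap (K.liftQ (x i) (iInf_le _ i))
  have hξ : ξ.comp K.mkQL = x i := rfl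
  have h := hw ξ
  rw [hξ, ← hvw] at h
  exact h

theorem isClosed_range_inclusionInDoubleDual [CompleteSpace E] :
    IsClosed (Set.range (inclusionInDoubleDual 𝕜 E)) := by
  have h : Isometry (inclusionInDoubleDualLi 𝕜 (E := E)) := LinearIsometry.isometry _
  exact h.isClosedEmbedding.isClosed_range

theorem exists_tendsto_apply_of_norm_le {ι : Type*} (U : Ultrafilter ι) (x : ι → StrongDual 𝕜 E)
    {C : ℝ} (hx : ∀ i, ‖x i‖ ≤ C) :
    ∃ Φ : StrongDual 𝕜 E, ∀ z, Tendsto (fun i => x i z) U (𝓝 (Φ z)) := by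
  obtain ⟨Φ, -, hΦ⟩ := (WeakDual.isCompact_closedBall (𝕜 := 𝕜) (E := E) 0 C).ultrafilter_le_nhds
    (U.map fun i => StrongDual.toWeakDual (x i))
    (by
      rw [Ultrafilter.coe_map, Filter.le_principal_iff, Filter.mem_map]
      exact Filter.univ_mem' fun i => by simpa using hx i)
  exact ⟨WeakDual.toStrongDual Φ, fun z => (WeakDual.eval_continuous z).tendsto Φ |>.comp hΦ⟩

theorem surjective_inclusionInDoubleDual_of_tendsto_weakSpace [CompleteSpace E]
    (h : ∀ x : ℕ → StrongDual 𝕜 E,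
      Tendsto (fun n => StrongDual.toWeakDual (x n)) (hyperfilter ℕ) (𝓝 0) →
        Tendsto (fun n => toWeakSpace 𝕜 (StrongDual 𝕜 E) (x n)) (hyperfilter ℕ) (𝓝 0)) :
    Function.Surjective (inclusionInDoubleDual 𝕜 E) := by
  intro F
  by_contra hF
  set d := infDist F (Set.range (inclusionInDoubleDual 𝕜 E))
  have hd : 0 < d :=
    (isClosed_range_inclusionInDoubleDual.notMem_iff_infDist_pos ⟨_, Set.mem_range_self 0⟩).1 hF
  obtain ⟨x, b, hx, hb⟩ := exists_seq_interleave
    (P := fun _ bs x => ‖x‖ ≤ 1 ∧ (∀ j, x (bs j) = 0) ∧ d / 2 ≤ ‖F x‖)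
    (Q := fun _ xs b => ‖b‖ < ‖F‖ + 1 ∧ ∀ i, xs i b = F (xs i))
    (fun _ bs => exists_forall_apply_eq_zero_half_infDist_le F bs)
    (fun _ xs => exists_norm_lt_forall_apply_eq F xs one_pos)
  set U := hyperfilter ℕ
  have hU (m : ℕ) : ∀ᶠ n in (U : Filter ℕ), m < n :=
    hyperfilter_le_cofinite (Nat.cofinite_eq_atTop ▸ eventually_gt_atTop m)
  obtain ⟨Φ, hΦ⟩ := exists_tendsto_apply_of_norm_le U x fun n => (hx n).1
  obtain ⟨Ψ, hΨ⟩ := exists_tendsto_apply_of_norm_le U (fun n => inclusionInDoubleDual 𝕜 E (b n))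
    fun n => (double_dual_bound 𝕜 E (b n)).trans (hb n).1.le
  have hΦb (j : ℕ) : Φ (b j) = 0 := tendsto_nhds_unique (hΦ (b j)) <|
    tendsto_const_nhds.congr' <| (hU j).mono fun n hn => ((hx n).2.1 ⟨j, hn⟩).symm
  have hΨx (i : ℕ) : Ψ (x i) = F (x i) := tendsto_nhds_unique (hΨ (x i)) <|
    tendsto_const_nhds.congr' <| (hU i).mono fun n hn => ((hb n).2 ⟨i, by omega⟩).symm
  have hΨΦ : Ψ Φ = 0 := tendsto_nhds_unique (hΨ Φ) (by simp [hΦb])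
  have hweak : Tendsto (fun n => StrongDual.toWeakDual (x n - Φ)) U (𝓝 0) :=
    tendsto_iff_forall_eval_tendsto_topDualPairing.2 fun z => by
      have : Tendsto (fun n => x n z - Φ z) U (𝓝 0) := by simpa using (hΦ z).sub_const (Φ z)
      exact this
  have hFx : Tendsto (fun n => F (x n)) U (𝓝 0) := by
    have : Tendsto (fun n => Ψ (x n - Φ)) U (𝓝 (Ψ 0)) :=
      ((WeakBilin.eval_continuous _ Ψ).tendsto 0).comp (h _ hweak)
    simpa [hΨx, hΨΦ] using this
  obtain ⟨n, hn⟩ := (NormedAddGroup.tendsto_nhds_zero.1 hFx (d / 2) (half_pos hd)).exists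
  exact (hx n).2.2.not_gt hn

end DoubleDual

theorem reflexive_of_leftUnit_LwStarW_general
    {𝕜 : Type*} [RCLike 𝕜]
    {A : Type*} [NonUnitalNormedRing A] [NormedSpace 𝕜 A]
    {B : Type*} [NormedAddCommGroup B] [NormedSpace 𝕜 B] [CompleteSpace B]
    (πℓ : A →L[𝕜] B →L[𝕜] B)
    (e : A) (he : ∀ b : B, πℓ e b = b)
    (hLww : ∀ {ι : Type*} (l : Filter ι) (ν : ι → StrongDual 𝕜 B),
      Tendsto (fun i => (StrongDual.toWeakDual ((ν i).comp (πℓ e)) : WeakDual 𝕜 B)) l (𝓝 0) →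
        Tendsto
          (fun i => (toWeakSpace 𝕜 (StrongDual 𝕜 B) ((ν i).comp (πℓ e)) : WeakSpace 𝕜 (StrongDual 𝕜 B)))
          l (𝓝 0)) :
    Function.Surjective (inclusionInDoubleDual 𝕜 B) := by
  have hπ : πℓ e = ContinuousLinearMap.id 𝕜 B := ContinuousLinearMap.ext he
  simp only [hπ, ContinuousLinearMap.comp_id] at hLww
  refine surjective_inclusionInDoubleDual_of_tendsto_weakSpace fun x hx => ?_
  have := hLww (map ULift.up (hyperfilter ℕ)) (fun n => x n.down) (by rwa [tendsto_map'_iff])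
  rwa [tendsto_map'_iff] at this

/-- Let `B` be a left Banach `A`-module and `e ∈ A` with `π_ℓ(e, b) = b` for
all `b`.  If `e` has the `Lw*w`-property with respect to `B` — whenever a net of translates
`(b ↦ b′_α(π_ℓ(e, b)))` tends to `0` in the weak* topology of `B*` it also tends to `0` in the
weak topology of `B*` — then `B` is reflexive. -/
theorem reflexive_of_leftUnit_LwStarW
    {𝕜 : Type*} [RCLike 𝕜]
    {A : Type*} [NonUnitalNormedRing A] [NormedSpace 𝕜 A]
    [IsScalarTower 𝕜 A A] [SMulCommClass 𝕜 A A] [CompleteSpace A]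
    {B : Type*} [NormedAddCommGroup B] [NormedSpace 𝕜 B] [CompleteSpace B]
    (πℓ : A →L[𝕜] B →L[𝕜] B)
    (hℓ : ∀ (a₁ a₂ : A) (b : B), πℓ (a₁ * a₂) b = πℓ a₁ (πℓ a₂ b))
    (e : A) (he : ∀ b : B, πℓ e b = b)
    (hLww : ∀ {ι : Type*} (l : Filter ι) (ν : ι → StrongDual 𝕜 B),
      Tendsto (fun i => (StrongDual.toWeakDual ((ν i).comp (πℓ e)) : WeakDual 𝕜 B)) l (𝓝 0) →
        Tendsto
          (fun i => (toWeakSpace 𝕜 (StrongDual 𝕜 B) ((ν i).comp (πℓ e)) : WeakSpace 𝕜 (StrongDual 𝕜 B)))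
          l (𝓝 0)) :
    Function.Surjective (inclusionInDoubleDual 𝕜 B) :=
  reflexive_of_leftUnit_LwStarW_general πℓ e he hLww
end
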